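/- arXiv:2411.03117 — 2 statements merged into one kernel-verified Lean document; each statement's English description precedes it below -/
import Mathlib

section
/- Let λ ∈ Z_{≥0}^n be a composition and let d ≥ 1 be an integer. There exists a serpentine μ ∈ Ser^n_{d,λ} with μ₊ = (λ,d)₊ if and only if λ_i = 0 for some i ≤ n; moreover, when such μ exists, it is unique. -/
/-- A composition of length `nn` is encoded as a function `ℕ → ℕ` vanishing from
index `nn` on (0-based indexing).  `IsSerpentine nn d lam mu` says that
`mu ∈ Ser^nn_{d,lam}` is a `d`-serpentine associated with `lam`. -/
def IsSerpentine (nn d : ℕ) (lam mu : ℕ → ℕ) : Prop :=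
  (∀ i, nn ≤ i → lam i = 0) ∧
  (∀ i, nn ≤ i → mu i = 0) ∧
  (∀ i, lam i ≤ mu i) ∧
  (∑ i ∈ Finset.range nn, (mu i - lam i)) = d ∧
  (∀ i j, i < j → j < nn → lam i ≤ lam j → mu i ≤ lam j) ∧
  (∀ i j, i < j → j < nn → lam j < lam i → lam i ≤ mu j → mu i = lam i)

/-- `domSum f s` is the sum of the `s` largest entries of a (finitely supported)
function `f : ℕ → ℕ`, i.e. the `s`-th partial sum of the dominant part `f₊`. -/
noncomputable def domSum (f : ℕ → ℕ) (s : ℕ) : ℕ :=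
  sSup ((fun T : Finset ℕ => ∑ i ∈ T, f i) '' {T : Finset ℕ | T.card ≤ s})

/-- `f₊ = g₊`: the dominant parts (non-increasing reorderings, padded by trailing
zeros) of the finitely supported functions `f` and `g` coincide. -/
def DomEq (f g : ℕ → ℕ) : Prop := ∀ s, domSum f s = domSum g s

/-- `f₊ ≤ g₊` in the dominance order: `|f| = |g|` and every partial sum of the
dominant part of `g` is at least the corresponding one for `f`. -/
def DomLE (f g : ℕ → ℕ) : Prop :=
  (∀ s, domSum f s ≤ domSum g s) ∧ ∃ N, ∀ s, N ≤ s → domSum f s = domSum g s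

/-- The composition `(λ, d)`: append the entry `d` to a length-`n` composition. -/
def appendComp (n : ℕ) (lam : ℕ → ℕ) (d : ℕ) : ℕ → ℕ :=
  fun i => if i < n then lam i else if i = n then d else 0

/-- The composition `(d₁, …, d_m)`: truncate `d` to its first `m` entries. -/
def truncComp (m : ℕ) (d : ℕ → ℕ) : ℕ → ℕ := fun i => if i < m then d i else 0

/-- A chain of iterated serpentines `μ⁽⁰⁾ = (0)`, `μ⁽ʲ⁾ ∈ Ser^{n_j}_{d_j, μ⁽ʲ⁻¹⁾}`. -/
def SerpChain (n : ℕ → ℕ) (m : ℕ) (d : ℕ → ℕ) (μ : ℕ → ℕ → ℕ) : Prop :=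
  (∀ i, μ 0 i = 0) ∧ ∀ j, j < m → IsSerpentine (n j) (d j) (μ j) (μ (j + 1))

/-- `d̄ ∈ Z_{≥0}^m` is `n̄`-admissible: for each `s < m` the number of nonzero
entries among `d_0, …, d_s` is at most `n_s`. -/
def NAdmissible (n : ℕ → ℕ) (m : ℕ) (d : ℕ → ℕ) : Prop :=
  ∀ s, s < m → ((Finset.range (s + 1)).filter (fun j => d j ≠ 0)).card ≤ n s


/-!
Since `λ ≤ μ`, comparing for each `v ≥ 1` the number of entries `≥ v` shows that
`μ₊ = (λ,d)₊` exactly when the increments `(λ_i, μ_i]` tile `{1, …, d}`. Covering `v = 1`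
forces a zero entry of `λ`. Conversely, conditions (iii) and (iv) force the tiles to be laid
out from left to right, which pins `μ` down to `μ_i = max(λ_i, min(λ_{i+1}, …, λ_{n-1}, d))`;
when `λ` has a zero entry this composition is a serpentine whose increments do tile `{1, …, d}`.
-/

open Finset

section DominantPart

variable {f g : ℕ → ℕ} {N : ℕ}

lemma sum_le_sum_range_of_support (hf : ∀ i, N ≤ i → f i = 0) (T : Finset ℕ) :
    ∑ i ∈ T, f i ≤ ∑ i ∈ range N, f i := by
  rw [← sum_filter_of_ne (p := (· < N)) fun i _ hi => not_le.1 fun h => hi (hf i h)]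
  exact sum_le_sum_of_subset fun i hi => mem_range.2 (mem_filter.1 hi).2

lemma bddAbove_sums_of_card_le (hf : ∀ i, N ≤ i → f i = 0) (s : ℕ) :
    BddAbove ((fun T : Finset ℕ => ∑ i ∈ T, f i) '' {T : Finset ℕ | #T ≤ s}) :=
  ⟨∑ i ∈ range N, f i, by rintro _ ⟨T, -, rfl⟩; exact sum_le_sum_range_of_support hf T⟩

lemma sum_le_domSum (hf : ∀ i, N ≤ i → f i = 0) {s : ℕ} {T : Finset ℕ} (hT : #T ≤ s) :
    ∑ i ∈ T, f i ≤ domSum f s :=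
  le_csSup (bddAbove_sums_of_card_le hf s) ⟨T, hT, rfl⟩

lemma domSum_le {s a : ℕ} (h : ∀ T : Finset ℕ, #T ≤ s → ∑ i ∈ T, f i ≤ a) :
    domSum f s ≤ a := by
  unfold domSum
  refine csSup_le ⟨0, ∅, by simp, rfl⟩ ?_
  rintro _ ⟨T, hT, rfl⟩
  exact h T hT

lemma exists_sum_eq_domSum (hf : ∀ i, N ≤ i → f i = 0) (s : ℕ) :
    ∃ T : Finset ℕ, #T ≤ s ∧ ∑ i ∈ T, f i = domSum f s := by
  obtain ⟨T, hT, hsum⟩ := Nat.sSup_mem (Set.Nonempty.image _ ⟨∅, by simp⟩)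
    (bddAbove_sums_of_card_le hf s)
  exact ⟨T, hT, hsum⟩

lemma domSum_zero (f : ℕ → ℕ) : domSum f 0 = 0 :=
  Nat.le_zero.1 <| domSum_le fun T hT => by simp [card_eq_zero.1 (Nat.le_zero.1 hT)]

lemma domSum_le_domSum_succ (hf : ∀ i, N ≤ i → f i = 0) (s : ℕ) :
    domSum f s ≤ domSum f (s + 1) := by
  obtain ⟨T, hT, hsum⟩ := exists_sum_eq_domSum hf s
  exact hsum ▸ sum_le_domSum hf (hT.trans s.le_succ)

lemma domSum_eq_sum_range (hf : ∀ i, N ≤ i → f i = 0) : domSum f N = ∑ i ∈ range N, f i :=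
  le_antisymm (domSum_le fun T _ => sum_le_sum_range_of_support hf T)
    (sum_le_domSum hf (card_range N).le)

/-- `domSum f (s + 1) - domSum f s` is the `(s + 1)`-st largest entry of `f`. -/
lemma domSum_add_le_domSum_succ_iff (hf : ∀ i, N ≤ i → f i = 0) {v : ℕ} (hv : 0 < v)
    (s : ℕ) : domSum f s + v ≤ domSum f (s + 1) ↔ s < #{i ∈ range N | v ≤ f i} := by
  constructor
  · intro h
    by_contra! hcard
    suffices domSum f (s + 1) ≤ domSum f s + (v - 1) by omega
    refine domSum_le fun T hT => ?_
    rcases hT.lt_or_eq with hT | hT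
    · exact (sum_le_domSum hf (Nat.lt_succ_iff.1 hT)).trans (Nat.le_add_right _ _)
    obtain ⟨i, hiT, hi⟩ : ∃ i ∈ T, f i < v := by
      by_contra! hall
      have hsub : T ⊆ {i ∈ range N | v ≤ f i} := fun i hi => by
        have := hall i hi
        refine mem_filter.2 ⟨mem_range.2 (not_le.1 fun h => ?_), this⟩
        rw [hf i h] at this
        omega
      have := card_le_card hsub
      omega
    have := sum_le_domSum hf (s := s) (T := T.erase i) (by rw [card_erase_of_mem hiT]; omega)
    rw [← add_sum_erase T f hiT]
    omega
  · intro hs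
    obtain ⟨T, hT, hsum⟩ := exists_sum_eq_domSum hf s
    obtain ⟨i, hi, hiT⟩ : ∃ i ∈ {i ∈ range N | v ≤ f i}, i ∉ T :=
      not_subset.1 fun h => by have := card_le_card h; omega
    have := sum_le_domSum hf (s := s + 1) (T := insert i T)
      (by rw [card_insert_of_notMem hiT]; omega)
    rw [sum_insert hiT] at this
    have := (mem_filter.1 hi).2
    omega

lemma domEq_iff_card_filter_le (hf : ∀ i, N ≤ i → f i = 0) (hg : ∀ i, N ≤ i → g i = 0) :
    DomEq f g ↔ ∀ v, 0 < v → #{i ∈ range N | v ≤ f i} = #{i ∈ range N | v ≤ g i} := by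
  constructor
  · intro h v hv
    refine eq_of_forall_lt_iff fun s => ?_
    rw [← domSum_add_le_domSum_succ_iff hf hv, ← domSum_add_le_domSum_succ_iff hg hv, h, h]
  · intro h s
    induction s with
    | zero => rw [domSum_zero, domSum_zero]
    | succ s ih =>
      refine eq_of_forall_le_iff fun w => ?_
      rcases le_or_gt w (domSum f s) with hw | hw
      · exact iff_of_true (hw.trans (domSum_le_domSum_succ hf s))
          ((ih ▸ hw).trans (domSum_le_domSum_succ hg s))
      · obtain ⟨v, hv, rfl⟩ : ∃ v, 0 < v ∧ w = domSum f s + v :=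
          ⟨w - domSum f s, by omega, by omega⟩
        rw [domSum_add_le_domSum_succ_iff hf hv, ih, domSum_add_le_domSum_succ_iff hg hv, h v hv]

end DominantPart

section Tiling

variable {n d : ℕ} {lam mu : ℕ → ℕ}

lemma appendComp_of_lt {i : ℕ} (hi : i < n) : appendComp n lam d i = lam i := if_pos hi

lemma appendComp_self : appendComp n lam d n = d := by simp [appendComp]

lemma appendComp_of_gt {i : ℕ} (hi : n < i) : appendComp n lam d i = 0 := by
  simp [appendComp, hi.not_gt, hi.ne']

def IncrementsTile (n d : ℕ) (lam mu : ℕ → ℕ) : Prop :=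
  ∀ v, 0 < v → #{i ∈ range n | lam i < v ∧ v ≤ mu i} = if v ≤ d then 1 else 0

lemma domEq_appendComp_iff (hmu : ∀ i, n ≤ i → mu i = 0) (hle : ∀ i, lam i ≤ mu i) :
    DomEq mu (appendComp n lam d) ↔ IncrementsTile n d lam mu := by
  rw [domEq_iff_card_filter_le (N := n + 1) (fun i hi => hmu i (by omega))
    (fun i hi => appendComp_of_gt (by omega))]
  refine forall₂_congr fun v hv => ?_
  have hcount_mu : #{i ∈ range (n + 1) | v ≤ mu i}
      = #{i ∈ range n | v ≤ lam i} + #{i ∈ range n | lam i < v ∧ v ≤ mu i} := by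
    simp only [card_filter, sum_range_succ, hmu n le_rfl, ← sum_add_distrib, nonpos_iff_eq_zero,
      hv.ne', if_false, add_zero]
    refine sum_congr rfl fun i _ => ?_
    have := hle i
    split_ifs <;> omega
  have hcount_app : #{i ∈ range (n + 1) | v ≤ appendComp n lam d i}
      = #{i ∈ range n | v ≤ lam i} + if v ≤ d then 1 else 0 := by
    rw [card_filter, card_filter, sum_range_succ, appendComp_self]
    congr 1
    exact sum_congr rfl fun i hi => by rw [appendComp_of_lt (mem_range.1 hi)]
  rw [hcount_mu, hcount_app, Nat.add_left_cancel_iff]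

lemma sum_tsub_eq_of_domEq_appendComp (hmu : ∀ i, n ≤ i → mu i = 0) (hle : ∀ i, lam i ≤ mu i)
    (h : DomEq mu (appendComp n lam d)) : ∑ i ∈ range n, (mu i - lam i) = d := by
  have htotal := h (n + 1)
  rw [domSum_eq_sum_range (fun i hi => hmu i (by omega)),
    domSum_eq_sum_range (fun i hi => appendComp_of_gt (by omega)), sum_range_succ,
    sum_range_succ, hmu n le_rfl, appendComp_self,
    sum_congr rfl fun i hi => appendComp_of_lt (mem_range.1 hi)] at htotal
  rw [sum_tsub_distrib _ fun i _ => hle i]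
  omega

namespace IncrementsTile

lemma existsUnique (ht : IncrementsTile n d lam mu) {v : ℕ} (hv : 0 < v) (hvd : v ≤ d) :
    ∃! i, i < n ∧ lam i < v ∧ v ≤ mu i := by
  obtain ⟨c, hc⟩ := card_eq_one.1 ((ht v hv).trans (if_pos hvd))
  have hmem : ∀ i, i ∈ ({i ∈ range n | lam i < v ∧ v ≤ mu i} : Finset ℕ) ↔ i = c := by
    simp [hc]
  refine ⟨c, ?_, fun i hi => ?_⟩
  · simpa using (hmem c).2 rfl
  · exact (hmem i).1 (by simpa using hi)

lemma exists_eq_zero (ht : IncrementsTile n d lam mu) (hd : 0 < d) :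
    ∃ i, i < n ∧ lam i = 0 := by
  obtain ⟨i, ⟨hi, h, -⟩, -⟩ := ht.existsUnique one_pos hd
  exact ⟨i, hi, by omega⟩

lemma mu_le (ht : IncrementsTile n d lam mu) {i : ℕ} (hi : i < n) (h : lam i < mu i) :
    mu i ≤ d := by
  by_contra! hd
  have := ht (mu i) (by omega)
  rw [if_neg hd.not_ge, card_eq_zero, filter_eq_empty_iff] at this
  exact this (mem_range.2 hi) ⟨h, le_rfl⟩

lemma mu_le_or_mu_le (ht : IncrementsTile n d lam mu) {i j : ℕ} (hi : i < n) (hj : j < n)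
    (hii : lam i < mu i) (hjj : lam j < mu j) (hij : i ≠ j) : mu i ≤ lam j ∨ mu j ≤ lam i := by
  by_contra! h
  have hv : min (mu i) (mu j) ≤ d := (min_le_left _ _).trans (ht.mu_le hi hii)
  exact hij ((ht.existsUnique (by omega) hv).unique ⟨hi, by omega, min_le_left _ _⟩
    ⟨hj, by omega, min_le_right _ _⟩)

end IncrementsTile

namespace IsSerpentine

lemma le (hs : IsSerpentine n d lam mu) (i : ℕ) : lam i ≤ mu i := hs.2.2.1 i

lemma mu_le_of_le (hs : IsSerpentine n d lam mu) {i j : ℕ} (hij : i < j) (hj : j < n)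
    (h : lam i ≤ lam j) : mu i ≤ lam j := hs.2.2.2.2.1 i j hij hj h

lemma mu_eq_of_lt_of_le (hs : IsSerpentine n d lam mu) {i j : ℕ} (hij : i < j) (hj : j < n)
    (h : lam j < lam i) (h' : lam i ≤ mu j) : mu i = lam i := hs.2.2.2.2.2 i j hij hj h h'

lemma incrementsTile (hs : IsSerpentine n d lam mu) (h : DomEq mu (appendComp n lam d)) :
    IncrementsTile n d lam mu :=
  (domEq_appendComp_iff hs.2.1 hs.le).1 h

lemma exists_lt_mu_eq (hs : IsSerpentine n d lam mu) (ht : IncrementsTile n d lam mu)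
    {j : ℕ} (hj : j < n) (hjj : lam j < mu j) (hpos : 0 < lam j) :
    ∃ p < j, lam p < mu p ∧ mu p = lam j := by
  obtain ⟨p, ⟨hp, hpl, hpm⟩, -⟩ := ht.existsUnique hpos (hjj.le.trans (ht.mu_le hj hjj))
  have hpj : p ≠ j := by rintro rfl; omega
  have hmu : mu p = lam j := by
    rcases ht.mu_le_or_mu_le hp hj (by omega) hjj hpj with h | h <;> omega
  refine ⟨p, ?_, by omega, hmu⟩
  by_contra! hjp
  have := hs.mu_eq_of_lt_of_le (hjp.lt_of_ne hpj.symm) hp hpl hpm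
  omega

lemma lt_of_mu_le (hs : IsSerpentine n d lam mu) (ht : IncrementsTile n d lam mu)
    {i j : ℕ} (hi : i < n) (hii : lam i < mu i) (hj : j < n) (hjj : lam j < mu j)
    (h : mu i ≤ lam j) : i < j := by
  induction hl : lam j using Nat.strong_induction_on generalizing j with
  | _ a ih =>
    obtain ⟨p, hpj, hpp, hp⟩ := hs.exists_lt_mu_eq ht hj hjj (by omega)
    rcases eq_or_ne i p with rfl | hip
    · exact hpj
    rcases ht.mu_le_or_mu_le hi (hpj.trans hj) hii hpp hip with h' | h'
    · exact (ih (lam p) (by omega) (hpj.trans hj) hpp h' rfl).trans hpj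
    · omega

lemma lam_le_of_lt (hs : IsSerpentine n d lam mu) (ht : IncrementsTile n d lam mu)
    {i l : ℕ} (hi : i < n) (hii : lam i < mu i) (hil : i < l) (hl : l < n) :
    lam i ≤ lam l := by
  by_contra! hli
  have := ht.mu_le hi hii
  -- The increment covering `λ_l + 1` can lie neither left of `l`, by (iii),
  -- nor right of `i`, by (iv) and `lt_of_mu_le`.
  obtain ⟨c, ⟨hc, hcl, hcm⟩, -⟩ := ht.existsUnique (v := lam l + 1) (by omega) (by omega)
  rcases lt_or_ge c l with hcl' | hlc
  · have := hs.mu_le_of_le hcl' hl (by omega)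
    omega
  · have hic : i < c := by omega
    have hci : mu c ≤ lam i := by
      by_contra! h
      have := hs.mu_eq_of_lt_of_le hic hc (by omega) h.le
      omega
    have := hs.lt_of_mu_le ht hc (by omega) hi hii hci
    omega

end IsSerpentine

/-- `min (λ_{i+1}, …, λ_{n-1}, d)` for `i < n`; it is `0` for `i ≥ n`, as `sInf ∅ = 0`. -/
noncomputable def tailMin (n d : ℕ) (lam : ℕ → ℕ) (i : ℕ) : ℕ :=
  sInf (appendComp n lam d '' Set.Ioc i n)

lemma tailMin_le_appendComp {i l : ℕ} (hil : i < l) (hl : l ≤ n) :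
    tailMin n d lam i ≤ appendComp n lam d l :=
  Nat.sInf_le ⟨l, ⟨hil, hl⟩, rfl⟩

lemma tailMin_le_lam {i l : ℕ} (hil : i < l) (hl : l < n) : tailMin n d lam i ≤ lam l :=
  (tailMin_le_appendComp hil hl.le).trans_eq (appendComp_of_lt hl)

lemma tailMin_le {i : ℕ} (hi : i < n) : tailMin n d lam i ≤ d :=
  (tailMin_le_appendComp hi le_rfl).trans_eq appendComp_self

lemma le_tailMin {i v : ℕ} (hi : i < n) (hvd : v ≤ d) (h : ∀ l, i < l → l < n → v ≤ lam l) :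
    v ≤ tailMin n d lam i := by
  obtain ⟨l, ⟨hil, hl⟩, hmin⟩ :=
    Nat.sInf_mem ((Set.nonempty_Ioc.2 hi).image (appendComp n lam d))
  rw [tailMin, ← hmin]
  rcases hl.lt_or_eq with hl | rfl
  · rw [appendComp_of_lt hl]
    exact h l hil hl
  · rwa [appendComp_self]

lemma tailMin_of_le {i : ℕ} (hi : n ≤ i) : tailMin n d lam i = 0 := by
  simp [tailMin, Set.Ioc_eq_empty hi.not_gt]

noncomputable def canonicalSerpentine (n d : ℕ) (lam : ℕ → ℕ) (i : ℕ) : ℕ :=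
  max (lam i) (tailMin n d lam i)

lemma canonicalSerpentine_of_le (hlam : ∀ i, n ≤ i → lam i = 0) {i : ℕ} (hi : n ≤ i) :
    canonicalSerpentine n d lam i = 0 := by
  simp [canonicalSerpentine, hlam i hi, tailMin_of_le hi]

lemma incrementsTile_canonicalSerpentine (h0 : ∃ i, i < n ∧ lam i = 0) :
    IncrementsTile n d lam (canonicalSerpentine n d lam) := by
  intro v hv
  split_ifs with hvd
  · set Z : Finset ℕ := {i ∈ range n | lam i < v}
    have hZ : Z.Nonempty := by
      obtain ⟨z, hz, hz0⟩ := h0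
      exact ⟨z, mem_filter.2 ⟨mem_range.2 hz, by omega⟩⟩
    obtain ⟨hzn, hzv⟩ := mem_filter.1 (Z.max'_mem hZ)
    rw [card_eq_one]
    refine ⟨Z.max' hZ, ext fun i => ?_⟩
    simp only [mem_filter, mem_range, mem_singleton, canonicalSerpentine, le_max_iff]
    constructor
    · rintro ⟨hi, hiv, hvi⟩
      have hiz : i ≤ Z.max' hZ := Z.le_max' i (mem_filter.2 ⟨mem_range.2 hi, hiv⟩)
      by_contra hne
      have := tailMin_le_lam (d := d) (lam := lam) (hiz.lt_of_ne hne) (mem_range.1 hzn)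
      omega
    · rintro rfl
      refine ⟨mem_range.1 hzn, hzv, Or.inr (le_tailMin (mem_range.1 hzn) hvd fun l hl hln => ?_)⟩
      by_contra! hlv
      have := Z.le_max' l (mem_filter.2 ⟨mem_range.2 hln, hlv⟩)
      omega
  · rw [card_eq_zero, filter_eq_empty_iff]
    rintro i hi ⟨hiv, hvi⟩
    have := tailMin_le (d := d) (lam := lam) (mem_range.1 hi)
    simp only [canonicalSerpentine] at hvi
    omega

lemma domEq_canonicalSerpentine (hlam : ∀ i, n ≤ i → lam i = 0)
    (h0 : ∃ i, i < n ∧ lam i = 0) : DomEq (canonicalSerpentine n d lam) (appendComp n lam d) :=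
  (domEq_appendComp_iff (fun _ => canonicalSerpentine_of_le hlam) fun _ => le_max_left _ _).2
    (incrementsTile_canonicalSerpentine h0)

lemma isSerpentine_canonicalSerpentine (hlam : ∀ i, n ≤ i → lam i = 0)
    (h0 : ∃ i, i < n ∧ lam i = 0) : IsSerpentine n d lam (canonicalSerpentine n d lam) :=
  ⟨hlam, fun _ => canonicalSerpentine_of_le hlam, fun _ => le_max_left _ _,
    sum_tsub_eq_of_domEq_appendComp (fun _ => canonicalSerpentine_of_le hlam)
      (fun _ => le_max_left _ _) (domEq_canonicalSerpentine hlam h0),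
    fun _ _ hij hj h => max_le h (tailMin_le_lam hij hj),
    fun _ _ hij hj h _ => max_eq_left ((tailMin_le_lam hij hj).trans h.le)⟩

namespace IsSerpentine

lemma tailMin_le_mu (hs : IsSerpentine n d lam mu) (ht : IncrementsTile n d lam mu) {i : ℕ}
    (hi : i < n) : tailMin n d lam i ≤ mu i := by
  by_contra! h
  have := tailMin_le (d := d) (lam := lam) hi
  obtain ⟨c, ⟨hc, hcl, hcm⟩, -⟩ := ht.existsUnique (v := mu i + 1) (by omega) (by omega)
  rcases lt_trichotomy c i with hci | rfl | hic
  · rcases le_or_gt (lam c) (lam i) with hle | hlt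
    · have := hs.mu_le_of_le hci hi hle
      have := hs.le i
      omega
    · have := hs.mu_eq_of_lt_of_le hci hi hlt (by omega)
      omega
  · omega
  · have := tailMin_le_lam (d := d) (lam := lam) hic hc
    omega

lemma mu_le_tailMin (hs : IsSerpentine n d lam mu) (ht : IncrementsTile n d lam mu) {i : ℕ}
    (hi : i < n) (hii : lam i < mu i) : mu i ≤ tailMin n d lam i :=
  le_tailMin hi (ht.mu_le hi hii) fun _ hil hl =>
    hs.mu_le_of_le hil hl (hs.lam_le_of_lt ht hi hii hil hl)

lemma eq_canonicalSerpentine (hs : IsSerpentine n d lam mu) (ht : IncrementsTile n d lam mu) :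
    mu = canonicalSerpentine n d lam := by
  funext i
  rcases lt_or_ge i n with hi | hi
  · have := hs.tailMin_le_mu ht hi
    unfold canonicalSerpentine
    rcases (hs.le i).lt_or_eq with hii | hii
    · have := hs.mu_le_tailMin ht hi hii
      omega
    · omega
  · rw [hs.2.1 i hi, canonicalSerpentine_of_le hs.1 hi]

end IsSerpentine

end Tiling

/-- Lemma 1.8.  There exists a serpentine `μ ∈ Ser^n_{d,λ}` with
`μ₊ = (λ,d)₊` if and only if some entry of `λ` vanishes; moreover such a `μ`,
when it exists, is unique. -/
theorem serpentine_with_equal_dominant_part_iff (n d : ℕ) (hd : 1 ≤ d)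
    (lam : ℕ → ℕ) (hlam : ∀ i, n ≤ i → lam i = 0) :
    ((∃ mu, IsSerpentine n d lam mu ∧ DomEq mu (appendComp n lam d)) ↔
      ∃ i, i < n ∧ lam i = 0) ∧
    (∀ mu mu',
      IsSerpentine n d lam mu → DomEq mu (appendComp n lam d) →
      IsSerpentine n d lam mu' → DomEq mu' (appendComp n lam d) →
      mu = mu') := by
  refine ⟨⟨fun ⟨mu, hs, hdom⟩ => (hs.incrementsTile hdom).exists_eq_zero hd, fun h0 =>
    ⟨_, isSerpentine_canonicalSerpentine hlam h0, domEq_canonicalSerpentine hlam h0⟩⟩, ?_⟩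
  intro mu mu' hs hdom hs' hdom'
  rw [hs.eq_canonicalSerpentine (hs.incrementsTile hdom),
    hs'.eq_canonicalSerpentine (hs'.incrementsTile hdom')]
end

section
/- Let (S, ≺) be a finite poset such that for every s ∈ S the set {t ∈ S : t ≺ s} is a chain (equivalently, the Hasse diagram of S is a forest with smaller elements closer to the roots). Suppose there is a bijection v : S → {1,…,m} such that s ≺ t implies v(s) > v(t), and such that for every s ∈ S the image v({t ∈ S : t ⪰ s}) is an interval of integers. Then there exist integers 0 < n₁ ≤ … ≤ n_m and an order isomorphism between (S, ≺) and the poset (Sc_n̄, ⪯) of staircase corners of Y_n̄. -/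
/-!
Linearly order `α` by `x ◁ y` iff `x < y`, or `x` and `y` are incomparable and `v x < v y`;
transitivity of `◁` is exactly where the convexity of the `v`-images of principal upper sets
enters. Put `x` in the cell `(row x, v x)`, where `row x` is the rank of `x` for `◁`, and give
column `v x` the length `1 + max {row z | x ≤ z}` (monotone in the column index). Deleting the
columns from left to right, the cell of `x` is a corner at its turn: every row strictly between
it and the bottom of its column is `row y` for some `y > x` (here the forest condition is used),
and the column `v y < v x` of such a `y` has already been deleted together with that row.
Finally `x ≤ y` iff `row x ≤ row y` and `v y ≤ v x`.
-/

/-- Cells are pairs `(i, j)` (row `i`, column `j`, both 0-based); the Young diagram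
`Y_n̄` consists of the cells with `j < m` and `i < n j`.  `IsSCorner n m Rr Rc c`
says that, after removing the rows in `Rr` and the columns in `Rc` from `Y_n̄`,
the cell `c` is a corner of the remaining (renumbered) Young diagram: it is the
lowest remaining cell of its column and the leftmost remaining cell of its row. -/
def IsSCorner (n : ℕ → ℕ) (m : ℕ) (Rr Rc : Set ℕ) (c : ℕ × ℕ) : Prop :=
  c.2 < m ∧ c.1 < n c.2 ∧ c.1 ∉ Rr ∧ c.2 ∉ Rc ∧
  (∀ i, c.1 < i → i < n c.2 → i ∈ Rr) ∧
  (∀ j, j < c.2 → j ∉ Rc → n j ≤ c.1)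

/-- An execution of the thin-hook removal process on `Y_n̄`: a list of cells, each
of which is a corner of the diagram remaining after deleting the rows and columns
of the previously recorded cells, such that at the end every cell of `Y_n̄` lies
in a removed row or in a removed column (the diagram is empty). -/
def IsExec (n : ℕ → ℕ) (m : ℕ) (l : List (ℕ × ℕ)) : Prop :=
  (∀ t (ht : t < l.length),
    IsSCorner n m {i | ∃ c ∈ l.take t, c.1 = i} {j | ∃ c ∈ l.take t, c.2 = j}
      (l.get ⟨t, ht⟩)) ∧
  (∀ i j, j < m → i < n j → (∃ c ∈ l, c.1 = i) ∨ (∃ c ∈ l, c.2 = j))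

/-- `S` is the set of staircase corners of `Y_n̄`: the recorded set of some
execution of the thin-hook removal process. -/
def IsScSet (n : ℕ → ℕ) (m : ℕ) (S : Set (ℕ × ℕ)) : Prop :=
  ∃ l : List (ℕ × ℕ), IsExec n m l ∧ S = {c | c ∈ l}

/-- The partial order on staircase corners: `(i,j) ⪯ (i',j')` iff `i ≤ i'` and
`j' ≤ j` (to increase, move down and to the left). -/
def ScLE (c c' : ℕ × ℕ) : Prop := c.1 ≤ c'.1 ∧ c'.2 ≤ c.2

/-- A DL-dense array: an array supported on the staircase corners `S` which is
order-preserving for the staircase-corner order. -/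
def DLDense (S : Set (ℕ × ℕ)) (R : ℕ × ℕ → ℕ) : Prop :=
  (∀ c, c ∉ S → R c = 0) ∧ ∀ c c', c ∈ S → c' ∈ S → ScLE c c' → R c ≤ R c'

/-- Vertical weight of an array: the sum of the entries in column `j`. -/
def vrtW (n : ℕ → ℕ) (R : ℕ × ℕ → ℕ) (j : ℕ) : ℕ := ∑ i ∈ Finset.range (n j), R (i, j)

/-- Horizontal weight of an array: the sum of the entries in row `i`. -/
def horW (m : ℕ) (R : ℕ × ℕ → ℕ) (i : ℕ) : ℕ := ∑ j ∈ Finset.range m, R (i, j)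

open Function

section StrictRank

variable {β : Type*} (r : β → β → Prop)

noncomputable def strictRank (x : β) : ℕ := {y | r y x}.ncard

variable {r} [Finite β] [IsStrictTotalOrder β r]

theorem strictRank_lt_strictRank {x y : β} (h : r x y) : strictRank r x < strictRank r y :=
  Set.ncard_lt_ncard ⟨fun _ hz => trans_of r hz h, fun hsub => irrefl x (hsub h)⟩

theorem strictRank_lt_strictRank_iff {x y : β} : strictRank r x < strictRank r y ↔ r x y := by
  refine ⟨fun h => ?_, strictRank_lt_strictRank⟩
  rcases trichotomous_of r x y with hxy | rfl | hyx
  · exact hxy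
  · exact absurd h (lt_irrefl _)
  · exact absurd (strictRank_lt_strictRank hyx) h.not_gt

theorem strictRank_injective : Injective (strictRank r) := by
  intro x y h
  rcases trichotomous_of r x y with hxy | rfl | hyx
  · exact absurd h (strictRank_lt_strictRank hxy).ne
  · rfl
  · exact absurd h (strictRank_lt_strictRank hyx).ne'

theorem range_strictRank : Set.range (strictRank r) = Set.Iio (Nat.card β) := by
  have hlt (x : β) : strictRank r x < Nat.card β := by
    rw [← Set.ncard_univ]
    exact Set.ncard_lt_ncard ⟨Set.subset_univ _, fun h => irrefl x (h (Set.mem_univ x))⟩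
  let g : β → Fin (Nat.card β) := fun x => ⟨strictRank r x, hlt x⟩
  have hg : Surjective g := (Finite.injective_iff_surjective_of_equiv (Finite.equivFin β)).1
    fun x y h => strictRank_injective (congrArg Fin.val h)
  ext k
  refine ⟨by rintro ⟨x, rfl⟩; exact hlt x, fun hk => ?_⟩
  obtain ⟨x, hx⟩ := hg ⟨k, hk⟩
  exact ⟨x, congrArg Fin.val hx⟩

end StrictRank

theorem List.mem_take_ofFn {γ : Type*} {m t : ℕ} {f : Fin m → γ} {c : γ} :
    c ∈ (List.ofFn f).take t ↔ ∃ j : Fin m, (j : ℕ) < t ∧ f j = c := by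
  simp only [List.mem_take_iff_getElem, List.getElem_ofFn, List.length_ofFn, lt_min_iff]
  constructor
  · rintro ⟨j, ⟨hjt, hjm⟩, rfl⟩
    exact ⟨⟨j, hjm⟩, hjt, rfl⟩
  · rintro ⟨j, hjt, rfl⟩
    exact ⟨j, ⟨hjt, j.isLt⟩, rfl⟩

theorem isExec_ofFn {n : ℕ → ℕ} {m : ℕ} {r : Fin m → ℕ} (hr : Injective r)
    (hlt : ∀ j, r j < n j) (hbelow : ∀ j i, r j < i → i < n j → ∃ j' < j, r j' = i) :
    IsExec n m (List.ofFn fun j => (r j, (j : ℕ))) := by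
  refine ⟨fun t ht => ?_, fun i j hj _ => Or.inr ⟨(r ⟨j, hj⟩, j), List.mem_ofFn.2 ⟨_, rfl⟩, rfl⟩⟩
  simp only [List.length_ofFn] at ht
  simp only [List.get_eq_getElem, List.getElem_ofFn, List.mem_take_ofFn]
  refine ⟨ht, hlt _, ?_, ?_, fun i h1 h2 => ?_, fun j hj hnot => ?_⟩
  · rintro ⟨_, ⟨j, hjt, rfl⟩, hj⟩
    exact hjt.ne (congrArg Fin.val (hr hj))
  · rintro ⟨_, ⟨j, hjt, rfl⟩, hj⟩
    exact hjt.ne hj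
  · obtain ⟨j, hjt, rfl⟩ := hbelow _ i h1 h2
    exact ⟨_, ⟨j, hjt, rfl⟩, rfl⟩
  · exact absurd ⟨_, ⟨⟨j, hj.trans ht⟩, hj, rfl⟩, rfl⟩ hnot

theorem ordConnected_image_Ici {α : Type*} [Preorder α] {m : ℕ} {v : α → Fin m}
    (hint : ∀ s : α, ∃ a b : ℕ,
      ∀ k : Fin m, (a ≤ (k : ℕ) ∧ (k : ℕ) ≤ b) ↔ ∃ t : α, s ≤ t ∧ v t = k)
    (s : α) : (v '' Set.Ici s).OrdConnected := by
  obtain ⟨a, b, h⟩ := hint s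
  refine ⟨fun k hk l hl i hi => ?_⟩
  obtain ⟨hak, -⟩ := (h k).2 hk
  obtain ⟨-, hlb⟩ := (h l).2 hl
  exact (h i).1 ⟨hak.trans hi.1, (Fin.le_def.1 hi.2).trans hlb⟩

section RowOrder

variable {α β : Type*} [PartialOrder α] [LinearOrder β] (v : α → β)

def RowLT (x y : α) : Prop := x < y ∨ (¬x ≤ y ∧ ¬y ≤ x ∧ v x < v y)

variable {v}

theorem le_of_le_of_apply_mem_Icc (hinj : Injective v)
    (hconv : ∀ s, (v '' Set.Ici s).OrdConnected) {x y w : α} (hxy : x ≤ y)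
    (hw : v w ∈ Set.Icc (v y) (v x)) : x ≤ w := by
  obtain ⟨t, hxt, hvt⟩ := (hconv x).out ⟨y, hxy, rfl⟩ ⟨x, le_rfl, rfl⟩ hw
  exact hinj hvt ▸ hxt

theorem rowLT_trans (hinj : Injective v) (hconv : ∀ s, (v '' Set.Ici s).OrdConnected)
    {x y z : α} (hxy : RowLT v x y) (hyz : RowLT v y z) : RowLT v x z := by
  -- Apart from order bookkeeping, only these three cyclic instances of convexity are needed.
  have hxyz : x ≤ y → v y ≤ v z → v z ≤ v x → x ≤ z := fun h h1 h2 =>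
    le_of_le_of_apply_mem_Icc hinj hconv h ⟨h1, h2⟩
  have hyzx : y ≤ z → v z ≤ v x → v x ≤ v y → y ≤ x := fun h h1 h2 =>
    le_of_le_of_apply_mem_Icc hinj hconv h ⟨h1, h2⟩
  have hzxy : z ≤ x → v x ≤ v y → v y ≤ v z → z ≤ y := fun h h1 h2 =>
    le_of_le_of_apply_mem_Icc hinj hconv h ⟨h1, h2⟩
  unfold RowLT at *
  grind [lt_iff_le_not_ge, le_trans]

theorem isStrictTotalOrder_rowLT (hinj : Injective v)
    (hconv : ∀ s, (v '' Set.Ici s).OrdConnected) : IsStrictTotalOrder α (RowLT v) where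
  irrefl x h := by rcases h with h | ⟨h, -⟩ <;> simp at h
  trans _ _ _ := rowLT_trans hinj hconv
  trichotomous x y hxy hyx := by
    unfold RowLT at hxy hyx
    by_contra hne
    rcases lt_trichotomy (v x) (v y) with h | h | h
    · grind [lt_iff_le_and_ne]
    · exact hne (hinj h)
    · grind [lt_iff_le_and_ne]

variable (v) in
noncomputable def row (x : α) : ℕ := strictRank (RowLT v) x

variable [Finite α]

theorem row_lt_row_iff (hinj : Injective v) (hconv : ∀ s, (v '' Set.Ici s).OrdConnected)
    {x y : α} : row v x < row v y ↔ RowLT v x y :=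
  have := isStrictTotalOrder_rowLT hinj hconv
  strictRank_lt_strictRank_iff

theorem row_injective (hinj : Injective v) (hconv : ∀ s, (v '' Set.Ici s).OrdConnected) :
    Injective (row v) :=
  have := isStrictTotalOrder_rowLT hinj hconv
  strictRank_injective

theorem range_row (hinj : Injective v) (hconv : ∀ s, (v '' Set.Ici s).OrdConnected) :
    Set.range (row v) = Set.Iio (Nat.card α) :=
  have := isStrictTotalOrder_rowLT hinj hconv
  range_strictRank

theorem le_iff_row_le_and_le (hinj : Injective v) (hconv : ∀ s, (v '' Set.Ici s).OrdConnected)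
    (hanti : StrictAnti v) {x y : α} : x ≤ y ↔ row v x ≤ row v y ∧ v y ≤ v x := by
  refine ⟨fun h => ?_, fun ⟨h1, h2⟩ => ?_⟩
  · rcases h.eq_or_lt with rfl | h
    · exact ⟨le_rfl, le_rfl⟩
    · exact ⟨((row_lt_row_iff hinj hconv).2 (Or.inl h)).le, (hanti h).le⟩
  · rcases h1.eq_or_lt with h1 | h1
    · exact (row_injective hinj hconv h1).le
    · rcases (row_lt_row_iff hinj hconv).1 h1 with h | ⟨-, -, h⟩
      · exact h.le
      · exact absurd h h2.not_gt

theorem lt_of_row_lt_of_row_le (hinj : Injective v) (hconv : ∀ s, (v '' Set.Ici s).OrdConnected)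
    (hchain : ∀ s : α, IsChain (· ≤ ·) {t | t < s}) (hanti : StrictAnti v) {x y z : α}
    (hxz : x ≤ z) (hxy : row v x < row v y) (hyz : row v y ≤ row v z) : x < y := by
  rcases (row_lt_row_iff hinj hconv).1 hxy with h | ⟨hnxy, hnyx, hvxy⟩
  · exact h
  exfalso
  rcases hyz.eq_or_lt with hyz | hyz
  · exact hnxy (row_injective hinj hconv hyz ▸ hxz)
  rcases (row_lt_row_iff hinj hconv).1 hyz with hyz | ⟨-, -, hvyz⟩
  · rcases hxz.eq_or_lt with rfl | hxz
    · exact hnyx hyz.le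
    · exact (hchain z hxz hyz (ne_of_not_le hnxy)).elim hnxy hnyx
  · exact (hvxy.trans hvyz).not_ge (hanti.antitone hxz)

variable (v) in
noncomputable def colLen (x : α) : ℕ := sSup (row v '' Set.Ici x) + 1

theorem lt_colLen_iff {x : α} {i : ℕ} : i < colLen v x ↔ ∃ z, x ≤ z ∧ i ≤ row v z := by
  have hbdd : BddAbove (row v '' Set.Ici x) := (Set.toFinite _).bddAbove
  rw [colLen, Nat.lt_succ_iff]
  constructor
  · intro hi
    obtain ⟨z, hxz, hz⟩ := Nat.sSup_mem (Set.image_nonempty.2 Set.nonempty_Ici) hbdd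
    exact ⟨z, hxz, hz ▸ hi⟩
  · rintro ⟨z, hxz, hi⟩
    exact hi.trans (le_csSup hbdd ⟨z, hxz, rfl⟩)

theorem row_lt_colLen (x : α) : row v x < colLen v x :=
  lt_colLen_iff.2 ⟨x, le_rfl, le_rfl⟩

theorem colLen_le_colLen (hinj : Injective v) (hconv : ∀ s, (v '' Set.Ici s).OrdConnected)
    (hanti : StrictAnti v) {x x' : α} (h : v x < v x') : colLen v x ≤ colLen v x' := by
  refine le_of_forall_lt fun i hi => ?_
  obtain ⟨z, hxz, hiz⟩ := lt_colLen_iff.1 hi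
  by_cases hx'z : x' ≤ z
  · exact lt_colLen_iff.2 ⟨z, hx'z, hiz⟩
  have hzx' : RowLT v z x' := by
    by_cases hzx' : z ≤ x'
    · exact Or.inl (hzx'.lt_of_not_ge hx'z)
    · exact Or.inr ⟨hzx', hx'z, (hanti.antitone hxz).trans_lt h⟩
  exact lt_colLen_iff.2 ⟨x', le_rfl, hiz.trans ((row_lt_row_iff hinj hconv).2 hzx').le⟩

theorem exists_lt_row_eq_of_row_lt_of_lt_colLen (hinj : Injective v)
    (hconv : ∀ s, (v '' Set.Ici s).OrdConnected) (hchain : ∀ s : α, IsChain (· ≤ ·) {t | t < s})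
    (hanti : StrictAnti v) {x : α} {i : ℕ} (h1 : row v x < i) (h2 : i < colLen v x) :
    ∃ y, x < y ∧ row v y = i := by
  obtain ⟨z, hxz, hiz⟩ := lt_colLen_iff.1 h2
  have hi : i ∈ Set.range (row v) := by
    have hz : row v z ∈ Set.Iio (Nat.card α) := range_row hinj hconv ▸ Set.mem_range_self z
    rw [range_row hinj hconv]
    exact hiz.trans_lt hz
  obtain ⟨y, rfl⟩ := hi
  exact ⟨y, lt_of_row_lt_of_row_le hinj hconv hchain hanti hxz h1 hiz, rfl⟩

end RowOrder

/-- Proposition 1.16.  Any finite poset whose Hasse diagram is a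
forest (every strict lower set is a chain), equipped with an order-reversing
bijection `v` onto `{1,…,m}` such that the `v`-image of every principal upper set
is an integer interval, is isomorphic to the poset of staircase corners of some
staircase Young diagram `Y_n̄`. -/
theorem realization_of_forest_posets (α : Type) [PartialOrder α]
    (m : ℕ) (v : α ≃ Fin m)
    (hchain : ∀ s : α, IsChain (· ≤ ·) {t : α | t < s})
    (hrev : ∀ s t : α, s < t → v t < v s)
    (hint : ∀ s : α, ∃ a b : ℕ,
      ∀ k : Fin m, (a ≤ (k : ℕ) ∧ (k : ℕ) ≤ b) ↔ ∃ t : α, s ≤ t ∧ v t = k) :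
    ∃ n : ℕ → ℕ, 0 < n 0 ∧ (∀ j k, j ≤ k → k < m → n j ≤ n k) ∧
      ∃ S : Set (ℕ × ℕ), IsScSet n m S ∧
        ∃ f : α → ℕ × ℕ, (∀ x, f x ∈ S) ∧ (∀ c ∈ S, ∃ x, f x = c) ∧
          ∀ x y : α, x ≤ y ↔ ScLE (f x) (f y) := by
  have hinj := v.injective
  have hconv := ordConnected_image_Ici hint
  have : Finite α := .of_equiv _ v.symm
  set n : ℕ → ℕ := fun j => if h : j < m then colLen v (v.symm ⟨j, h⟩) else 1 with hn_def
  have hn (j : Fin m) : n j = colLen v (v.symm j) := dif_pos j.isLt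
  refine ⟨n, ?_, fun j k hjk hk => ?_, _,
    ⟨_, isExec_ofFn (r := fun j => row v (v.symm j)) ?_ ?_ ?_, rfl⟩,
    fun x => (row v x, v x), fun x => List.mem_ofFn.2 ⟨v x, by simp⟩, ?_,
    fun x y => le_iff_row_le_and_le hinj hconv hrev⟩
  · simp only [hn_def]
    split <;> simp [colLen]
  · rcases hjk.eq_or_lt with rfl | hjk
    · exact le_rfl
    · rw [hn ⟨j, hjk.trans hk⟩, hn ⟨k, hk⟩]
      exact colLen_le_colLen hinj hconv hrev (by simpa using hjk)
  · exact (row_injective hinj hconv).comp v.symm.injective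
  · exact fun j => hn j ▸ row_lt_colLen _
  · intro j i h1 h2
    obtain ⟨y, hxy, rfl⟩ :=
      exists_lt_row_eq_of_row_lt_of_lt_colLen hinj hconv hchain hrev h1 (hn j ▸ h2)
    exact ⟨v y, by simpa using hrev _ _ hxy, by simp⟩
  · rintro c hc
    obtain ⟨j, rfl⟩ := List.mem_ofFn.1 hc
    exact ⟨v.symm j, by simp⟩
end
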